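/- If the Feinsilver polynomials of a NEF satisfy the four-term recurrence of a cubic variance function, then they are μ-2-orthogonal: ∫ P_n P_q dμ = 0 whenever n ≥ 2q with q ≥ 1, and ∫ P_n dμ = 0 for n ≥ 1. -/

import Mathlib

open MeasureTheory Real

/-- The effective domain of the Laplace transform. -/
def laplaceDomain (μ : Measure ℝ) : Set ℝ :=
  {θ : ℝ | Integrable (fun x => Real.exp (θ * x)) μ}

/-- The cumulant function. -/
noncomputable def cumulant (μ : Measure ℝ) (θ : ℝ) : ℝ :=
  Real.log (∫ x, Real.exp (θ * x) ∂μ)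

/-- The density of the mean-`m` member of the NEF with respect to the basis `μ`. -/
noncomputable def nefDensity (μ : Measure ℝ) (ψ : ℝ → ℝ) (x m : ℝ) : ℝ :=
  Real.exp (ψ m * x - cumulant μ (ψ m))



-- pointwise bound
lemma abs_pow_mul_exp_le {δ : ℝ} (hδ : 0 < δ) (k : ℕ) (θ x : ℝ) :
    |x| ^ k * Real.exp (θ * x)
      ≤ (k.factorial / δ ^ k) * (Real.exp ((θ + δ) * x) + Real.exp ((θ - δ) * x)) := by
  have h1 : |x| ^ k ≤ (k.factorial / δ ^ k) * Real.exp (δ * |x|) := by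
    have h2 : (δ * |x|) ^ k / k.factorial ≤ Real.exp (δ * |x|) := by
      have := Real.sum_le_exp_of_nonneg (x := δ * |x|) (by positivity) (k + 1)
      refine le_trans ?_ this
      exact Finset.single_le_sum (f := fun i => (δ * |x|) ^ i / i.factorial)
        (fun i _ => by positivity) (Finset.self_mem_range_succ k)
    have hδk : (0:ℝ) < δ ^ k := by positivity
    rw [mul_pow, div_le_iff₀ (by positivity)] at h2
    rw [div_mul_eq_mul_div, le_div_iff₀ hδk]
    nlinarith [Real.exp_nonneg (δ * |x|)]
  have h3 : Real.exp (δ * |x|) * Real.exp (θ * x)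
      ≤ Real.exp ((θ + δ) * x) + Real.exp ((θ - δ) * x) := by
    rw [← Real.exp_add]
    rcases abs_cases x with ⟨h, _⟩ | ⟨h, _⟩
    · rw [h]; refine le_add_of_le_of_nonneg (by rw [Real.exp_le_exp]; ring_nf; exact le_refl _) (Real.exp_nonneg _)
    · rw [h]; refine le_add_of_nonneg_of_le (Real.exp_nonneg _) (by rw [Real.exp_le_exp]; ring_nf; exact le_refl _)
  calc |x| ^ k * Real.exp (θ * x)
      ≤ ((k.factorial / δ ^ k) * Real.exp (δ * |x|)) * Real.exp (θ * x) := by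
        exact mul_le_mul_of_nonneg_right h1 (Real.exp_nonneg _)
    _ = (k.factorial / δ ^ k) * (Real.exp (δ * |x|) * Real.exp (θ * x)) := by ring
    _ ≤ _ := by
        exact mul_le_mul_of_nonneg_left h3 (by positivity)

lemma mem_laplaceDomain {μ : Measure ℝ} {θ : ℝ} (h : θ ∈ laplaceDomain μ) :
    Integrable (fun x => Real.exp (θ * x)) μ := h

lemma exists_delta {μ : Measure ℝ} {θ : ℝ} (hθ : θ ∈ interior (laplaceDomain μ)) :
    ∃ δ > 0, θ + δ ∈ interior (laplaceDomain μ) ∧ θ - δ ∈ interior (laplaceDomain μ) := by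
  obtain ⟨ε, hε, hball⟩ := Metric.isOpen_iff.1 isOpen_interior θ hθ
  refine ⟨ε / 2, by positivity, hball ?_, hball ?_⟩
  · rw [Metric.mem_ball, dist_eq, show θ + ε/2 - θ = ε/2 by ring, abs_of_pos (by positivity)]
    linarith
  · rw [Metric.mem_ball, dist_eq, show θ - ε/2 - θ = -(ε/2) by ring, abs_neg,
      abs_of_pos (by positivity)]
    linarith

lemma integrable_abs_pow_mul_exp {μ : Measure ℝ} {θ : ℝ}
    (hθ : θ ∈ interior (laplaceDomain μ)) (k : ℕ) :
    Integrable (fun x => |x| ^ k * Real.exp (θ * x)) μ := by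
  obtain ⟨δ, hδ, h₁, h₂⟩ := exists_delta hθ
  have hi₁ : Integrable (fun x => Real.exp ((θ + δ) * x)) μ :=
    mem_laplaceDomain (interior_subset h₁)
  have hi₂ : Integrable (fun x => Real.exp ((θ - δ) * x)) μ :=
    mem_laplaceDomain (interior_subset h₂)
  refine Integrable.mono (((hi₁.add hi₂).const_mul (k.factorial / δ ^ k))) ?_ ?_
  · exact ((continuous_abs.pow k).mul (by continuity)).aestronglyMeasurable
  · filter_upwards with x
    rw [norm_of_nonneg (by positivity)]
    exact le_trans (abs_pow_mul_exp_le hδ k θ x) (le_of_eq (by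
      rw [norm_of_nonneg]; · simp
      · simp only [Pi.add_apply]; positivity))

lemma integrable_pow_mul_exp {μ : Measure ℝ} {θ : ℝ}
    (hθ : θ ∈ interior (laplaceDomain μ)) (k : ℕ) :
    Integrable (fun x => x ^ k * Real.exp (θ * x)) μ := by
  refine (integrable_abs_pow_mul_exp hθ k).mono ?_ ?_
  · exact ((continuous_pow k).mul (by continuity)).aestronglyMeasurable
  · filter_upwards with x
    simp only [Real.norm_eq_abs, abs_mul, abs_pow, abs_abs,
      abs_of_nonneg (Real.exp_nonneg _)]
    exact le_refl _

noncomputable def Lk (μ : Measure ℝ) (k : ℕ) (θ : ℝ) : ℝ := ∫ x, x ^ k * Real.exp (θ * x) ∂μ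

lemma hasDerivAt_Lk {μ : Measure ℝ} {θ : ℝ} (hθ : θ ∈ interior (laplaceDomain μ)) (k : ℕ) :
    HasDerivAt (Lk μ k) (Lk μ (k + 1) θ) θ := by
  obtain ⟨δ, hδ, h₁, h₂⟩ := exists_delta hθ
  have key := hasDerivAt_integral_of_dominated_loc_of_deriv_le (μ := μ)
    (F := fun θ' x => x ^ k * Real.exp (θ' * x))
    (F' := fun θ' x => x ^ (k + 1) * Real.exp (θ' * x))
    (bound := fun x => |x| ^ (k+1) * Real.exp ((θ + δ) * x)
      + |x| ^ (k+1) * Real.exp ((θ - δ) * x))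
    (x₀ := θ) (Metric.ball_mem_nhds θ hδ) ?_ ?_ ?_ ?_ ?_ ?_
  · exact key.2
  · filter_upwards with θ'
    exact ((continuous_pow k).mul (by continuity)).aestronglyMeasurable
  · exact integrable_pow_mul_exp hθ k
  · exact ((continuous_pow (k+1)).mul (by continuity)).aestronglyMeasurable
  · filter_upwards with x
    intro θ' hθ'
    rw [Metric.mem_ball, dist_eq] at hθ'
    have hb := abs_le.1 hθ'.le
    rw [Real.norm_eq_abs, abs_mul, abs_pow, Real.abs_exp]
    have hexp : Real.exp (θ' * x) ≤ Real.exp ((θ + δ) * x) + Real.exp ((θ - δ) * x) := by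
      rcases le_or_gt 0 x with hx | hx
      · exact le_add_of_le_of_nonneg
          (Real.exp_le_exp.2 (mul_le_mul_of_nonneg_right (by linarith) hx)) (Real.exp_nonneg _)
      · refine le_add_of_nonneg_of_le (Real.exp_nonneg _) (Real.exp_le_exp.2 ?_)
        nlinarith
    calc |x| ^ (k+1) * Real.exp (θ' * x)
        ≤ |x| ^ (k+1) * (Real.exp ((θ + δ) * x) + Real.exp ((θ - δ) * x)) :=
          mul_le_mul_of_nonneg_left hexp (by positivity)
      _ = _ := by ring
  · exact ((integrable_abs_pow_mul_exp h₁ (k+1)).add (integrable_abs_pow_mul_exp h₂ (k+1)))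
  · filter_upwards with x
    intro θ' _
    have h := ((hasDerivAt_id θ').mul_const x).exp
    have h2 := h.const_mul (x ^ k)
    simp only [id_eq, one_mul] at h2
    convert h2 using 1
    · rfl
    · ring

lemma contDiffOn_Lk (μ : Measure ℝ) (k : ℕ) :
    ContDiffOn ℝ (⊤ : ℕ∞) (Lk μ k) (interior (laplaceDomain μ)) := by
  refine contDiffOn_infty.2 fun n => ?_
  induction n generalizing k with
  | zero =>
    simp only [CharP.cast_eq_zero, contDiffOn_zero]
    exact fun θ hθ => ((hasDerivAt_Lk hθ k).continuousAt).continuousWithinAt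
  | succ n ih =>
    have hU : IsOpen (interior (laplaceDomain μ)) := isOpen_interior
    rw [show ((n + 1 : ℕ) : WithTop ℕ∞) = (n : WithTop ℕ∞) + 1 by exact_mod_cast rfl,
      contDiffOn_succ_iff_derivWithin hU.uniqueDiffOn]
    refine ⟨fun θ hθ => ((hasDerivAt_Lk hθ k).differentiableAt).differentiableWithinAt,
      by simp, ?_⟩
    refine (ih (k+1)).congr fun θ hθ => ?_
    rw [derivWithin_of_isOpen hU hθ, (hasDerivAt_Lk hθ k).deriv]

lemma Lk_zero_pos (μ : Measure ℝ) [IsProbabilityMeasure μ] {θ : ℝ}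
    (hθ : θ ∈ laplaceDomain μ) : 0 < Lk μ 0 θ := by
  rw [Lk]
  rw [MeasureTheory.integral_pos_iff_support_of_nonneg]
  · have : (Function.support fun x => x ^ 0 * Real.exp (θ * x)) = Set.univ := by
      ext x; simp [Function.mem_support, Real.exp_ne_zero]
    rw [this]
    simp
  · intro x; positivity
  · simpa using mem_laplaceDomain hθ

lemma contDiffOn_cumulant (μ : Measure ℝ) [IsProbabilityMeasure μ] :
    ContDiffOn ℝ (⊤ : ℕ∞) (cumulant μ) (interior (laplaceDomain μ)) := by
  have h := contDiffOn_Lk μ 0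
  refine ContDiffOn.congr (h.log ?_) ?_
  · exact fun θ hθ => (Lk_zero_pos μ (interior_subset hθ)).ne'
  · intro θ hθ
    rw [cumulant, Lk]
    congr 1
    refine integral_congr_ae ?_
    filter_upwards with x
    simp

lemma cumulant_zero (μ : Measure ℝ) [IsProbabilityMeasure μ] : cumulant μ 0 = 0 := by
  rw [cumulant]
  simp

section Main

variable {μ : Measure ℝ} [IsProbabilityMeasure μ] {ψ : ℝ → ℝ} {M : Set ℝ} (hM : IsOpen M)
  (hmem : ∀ m ∈ M, ψ m ∈ interior (laplaceDomain μ))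
  (hpsi : ContDiffOn ℝ (⊤ : ℕ∞) ψ M)

include hM hmem hpsi

lemma contDiffOn_C : ContDiffOn ℝ (⊤ : ℕ∞) (fun m => cumulant μ (ψ m)) M :=
  (contDiffOn_cumulant μ).comp hpsi (fun m hm => hmem m hm)

lemma rep : ∀ n : ℕ, ∃ c : ℕ → ℝ → ℝ,
    (∀ k, ContDiffOn ℝ (⊤ : ℕ∞) (c k) M) ∧ (∀ k, n < k → ∀ m' ∈ M, c k m' = 0) ∧
    ∀ x : ℝ, ∀ m ∈ M,
      iteratedDerivWithin n (fun m' => nefDensity μ ψ x m') M m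
        = (∑ k ∈ Finset.range (n + 1), c k m * x ^ k) * nefDensity μ ψ x m := by
  intro n
  induction n with
  | zero =>
    refine ⟨fun k _ => if k = 0 then 1 else 0, ?_, ?_, ?_⟩
    · intro k; exact contDiffOn_const
    · intro k hk _ _; simp only [if_neg (by omega : ¬ k = 0)]
    · intro x m _; simp [iteratedDerivWithin_zero]
  | succ n ih =>
    obtain ⟨c, hsm, hc0, hrep⟩ := ih
    set C : ℝ → ℝ := fun m => cumulant μ (ψ m) with hCdef
    have hC : ContDiffOn ℝ (⊤ : ℕ∞) C M := contDiffOn_C hM hmem hpsi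
    have hone : ((⊤ : ℕ∞) : WithTop ℕ∞) ≠ 0 := by simp
    refine ⟨fun k m => derivWithin (c k) M m
        + derivWithin ψ M m * (if k = 0 then 0 else c (k - 1) m)
        - derivWithin C M m * c k m, ?_, ?_, ?_⟩
    · intro k
      have h1 : ContDiffOn ℝ (⊤ : ℕ∞) (derivWithin (c k) M) M :=
        (hsm k).derivWithin hM.uniqueDiffOn (le_refl _)
      have h2 : ContDiffOn ℝ (⊤ : ℕ∞) (derivWithin ψ M) M :=
        hpsi.derivWithin hM.uniqueDiffOn (le_refl _)
      have h3 : ContDiffOn ℝ (⊤ : ℕ∞) (derivWithin C M) M :=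
        hC.derivWithin hM.uniqueDiffOn (le_refl _)
      refine (h1.add (h2.mul ?_)).sub (h3.mul (hsm k))
      rcases Nat.eq_zero_or_pos k with hk | hk
      · simp only [hk, if_pos rfl]; exact contDiffOn_const
      · simp only [if_neg (by omega : ¬ k = 0)]; exact hsm (k - 1)
    · intro k hk m' hm'
      have e1 : derivWithin (c k) M m' = 0 := by
        rw [derivWithin_congr (fun y hy => hc0 k (by omega) y hy)
          (hc0 k (by omega) m' hm'), derivWithin_fun_const, Pi.zero_apply]
      show derivWithin (c k) M m' + derivWithin ψ M m' * (if k = 0 then 0 else c (k-1) m')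
          - derivWithin C M m' * c k m' = 0
      rw [e1, if_neg (by omega : ¬ k = 0), hc0 (k-1) (by omega) m' hm',
        hc0 k (by omega) m' hm']
      ring
    · intro x m hm
      have hUD : UniqueDiffWithinAt ℝ M m := hM.uniqueDiffOn m hm
      rw [iteratedDerivWithin_succ, derivWithin_of_isOpen hM hm]
      have heq : (iteratedDerivWithin n (fun m' => nefDensity μ ψ x m') M)
          =ᶠ[nhds m] fun m' => (∑ k ∈ Finset.range (n + 1), c k m' * x ^ k)
            * Real.exp (ψ m' * x - C m') := by
        filter_upwards [hM.mem_nhds hm] with m' hm'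
        rw [hrep x m' hm']; rfl
      rw [heq.deriv_eq]
      have hdiff : ∀ (g : ℝ → ℝ), ContDiffOn ℝ (⊤ : ℕ∞) g M →
          HasDerivAt g (derivWithin g M m) m := by
        intro g hg
        have : DifferentiableAt ℝ g m :=
          ((hg.differentiableOn hone).differentiableAt (hM.mem_nhds hm))
        rw [derivWithin_of_isOpen hM hm]
        exact this.hasDerivAt
      have hS : HasDerivAt (fun m' => ∑ k ∈ Finset.range (n + 1), c k m' * x ^ k)
          (∑ k ∈ Finset.range (n + 1), derivWithin (c k) M m * x ^ k) m := by
        refine HasDerivAt.fun_sum fun k _ => ?_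
        exact (hdiff (c k) (hsm k)).mul_const _
      have hE := (((hdiff ψ hpsi).mul_const x).fun_sub (hdiff C hC)).exp
      have htot := hS.fun_mul hE
      rw [htot.deriv]
      have hcn1 : derivWithin (c (n+1)) M m = 0 := by
        rw [derivWithin_congr (fun y hy => hc0 (n+1) (by omega) y hy)
          (hc0 (n+1) (by omega) m hm), derivWithin_fun_const, Pi.zero_apply]
      have hsplit : ∀ (d : ℕ → ℝ), d (n+1) = 0 →
          ∑ k ∈ Finset.range (n + 2), d k * x ^ k
            = ∑ k ∈ Finset.range (n + 1), d k * x ^ k := by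
        intro d hd
        rw [Finset.sum_range_succ, hd]; ring
      have hshift : ∑ k ∈ Finset.range (n + 2),
            (derivWithin ψ M m * (if k = 0 then 0 else c (k-1) m)) * x ^ k
          = derivWithin ψ M m * (x * ∑ k ∈ Finset.range (n + 1), c k m * x ^ k) := by
        rw [Finset.sum_range_succ']
        have h0 : (derivWithin ψ M m * (if (0:ℕ) = 0 then (0:ℝ) else c (0 - 1) m)) * x ^ 0
            = 0 := by simp
        rw [h0, add_zero, Finset.mul_sum, Finset.mul_sum]
        apply Finset.sum_congr rfl
        intro k _
        rw [if_neg (Nat.succ_ne_zero k), Nat.add_sub_cancel]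
        ring
      have expand : ∑ k ∈ Finset.range (n + 1 + 1),
            (derivWithin (c k) M m + derivWithin ψ M m * (if k = 0 then 0 else c (k - 1) m)
              - derivWithin C M m * c k m) * x ^ k
          = (∑ k ∈ Finset.range (n + 1), derivWithin (c k) M m * x ^ k)
            + derivWithin ψ M m * (x * ∑ k ∈ Finset.range (n + 1), c k m * x ^ k)
            - derivWithin C M m * ∑ k ∈ Finset.range (n + 1), c k m * x ^ k := by
        simp only [sub_mul, add_mul, Finset.sum_sub_distrib, Finset.sum_add_distrib]
        rw [hsplit _ (by rw [hcn1]), hshift,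
          hsplit _ (by rw [hc0 (n+1) (by omega) m hm]; ring)]
        congr 1
        rw [Finset.mul_sum]
        apply Finset.sum_congr rfl
        intro k _
        ring
      rw [expand]
      show _ = _ * nefDensity μ ψ x m
      have hnd : nefDensity μ ψ x m = Real.exp (ψ m * x - C m) := rfl
      rw [hnd]
      ring
set_option linter.unusedSectionVars false in
lemma hasDerivAt_D (n : ℕ) (x : ℝ) {m : ℝ} (hm : m ∈ M) :
    HasDerivAt (fun m' => iteratedDerivWithin n (fun m'' => nefDensity μ ψ x m'') M m')
      (iteratedDerivWithin (n+1) (fun m'' => nefDensity μ ψ x m'') M m) m := by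
  obtain ⟨c, hsm, _, hrep⟩ := rep hM hmem hpsi n
  have hone : ((⊤ : ℕ∞) : WithTop ℕ∞) ≠ 0 := by simp
  set C : ℝ → ℝ := fun m => cumulant μ (ψ m) with hCdef
  have hC : ContDiffOn ℝ (⊤ : ℕ∞) C M := contDiffOn_C hM hmem hpsi
  have heq : (iteratedDerivWithin n (fun m' => nefDensity μ ψ x m') M)
      =ᶠ[nhds m] fun m' => (∑ k ∈ Finset.range (n + 1), c k m' * x ^ k)
        * Real.exp (ψ m' * x - C m') := by
    filter_upwards [hM.mem_nhds hm] with m' hm'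
    rw [hrep x m' hm']; rfl
  have hdiffG : DifferentiableAt ℝ (fun m' => (∑ k ∈ Finset.range (n + 1), c k m' * x ^ k)
      * Real.exp (ψ m' * x - C m')) m := by
    have hd : ∀ (g : ℝ → ℝ), ContDiffOn ℝ (⊤ : ℕ∞) g M → DifferentiableAt ℝ g m :=
      fun g hg => (hg.differentiableOn hone).differentiableAt (hM.mem_nhds hm)
    exact (DifferentiableAt.fun_sum fun k _ => ((hd (c k) (hsm k)).mul_const _)).mul
      (((hd ψ hpsi).mul_const x).sub (hd C hC)).exp
  have hdiffD : DifferentiableAt ℝ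
      (iteratedDerivWithin n (fun m' => nefDensity μ ψ x m') M) m :=
    (Filter.EventuallyEq.differentiableAt_iff heq).2 hdiffG
  have hval : iteratedDerivWithin (n+1) (fun m'' => nefDensity μ ψ x m'') M m
      = deriv (iteratedDerivWithin n (fun m'' => nefDensity μ ψ x m'') M) m := by
    rw [iteratedDerivWithin_succ, derivWithin_of_isOpen hM hm]
  rw [hval]
  exact hdiffD.hasDerivAt

set_option linter.unusedSectionVars false in
lemma integrable_D (n : ℕ) {m : ℝ} (hm : m ∈ M) :
    Integrable (fun x => iteratedDerivWithin n (fun m' => nefDensity μ ψ x m') M m) μ := by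
  obtain ⟨c, hsm, _, hrep⟩ := rep hM hmem hpsi n
  have hfun : (fun x => iteratedDerivWithin n (fun m' => nefDensity μ ψ x m') M m)
      = fun x => ∑ k ∈ Finset.range (n + 1),
          (c k m * Real.exp (-(cumulant μ (ψ m)))) * (x ^ k * Real.exp (ψ m * x)) := by
    funext x
    rw [hrep x m hm, nefDensity, sub_eq_add_neg, Real.exp_add, Finset.sum_mul]
    exact Finset.sum_congr rfl fun k _ => by ring
  rw [hfun]
  exact integrable_finset_sum _ fun k _ =>
    (integrable_pow_mul_exp (hmem m hm) k).const_mul _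

set_option linter.unusedSectionVars false in
lemma aesm_D (n : ℕ) {m : ℝ} (hm : m ∈ M) :
    AEStronglyMeasurable
      (fun x => iteratedDerivWithin n (fun m' => nefDensity μ ψ x m') M m) μ := by
  obtain ⟨c, hsm, _, hrep⟩ := rep hM hmem hpsi n
  have hfun : (fun x => iteratedDerivWithin n (fun m' => nefDensity μ ψ x m') M m)
      = fun x => (∑ k ∈ Finset.range (n + 1), c k m * x ^ k)
          * Real.exp (ψ m * x - cumulant μ (ψ m)) := by
    funext x; rw [hrep x m hm]; rfl
  rw [hfun]
  exact Continuous.aestronglyMeasurable (by continuity)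

set_option linter.unusedSectionVars false in
lemma hasDerivAt_integral_D (n : ℕ) {m₁ : ℝ} (hm₁ : m₁ ∈ M) :
    HasDerivAt (fun m => ∫ x, iteratedDerivWithin n (fun m' => nefDensity μ ψ x m') M m ∂μ)
      (∫ x, iteratedDerivWithin (n+1) (fun m' => nefDensity μ ψ x m') M m₁ ∂μ) m₁ := by
  obtain ⟨c, hsm, _, hrep⟩ := rep hM hmem hpsi (n+1)
  -- a closed ball inside M
  obtain ⟨ε₀, hε₀, hball⟩ := Metric.isOpen_iff.1 hM m₁ hm₁
  set ε := ε₀ / 2 with hεdef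
  have hε : 0 < ε := by positivity
  set K := Metric.closedBall m₁ ε with hKdef
  have hKM : K ⊆ M := fun y hy => hball (Metric.mem_ball.2
    (lt_of_le_of_lt (Metric.mem_closedBall.1 hy) (by rw [hεdef]; linarith)))
  have hKc : IsCompact K := isCompact_closedBall _ _
  have hm₁K : m₁ ∈ K := Metric.mem_closedBall_self hε.le
  -- bounds for the coefficients
  have hbk : ∀ k : ℕ, ∃ B : ℝ, ∀ y ∈ K, |c k y| ≤ B := by
    intro k
    obtain ⟨B, hB⟩ := hKc.exists_bound_of_continuousOn
      (((hsm k).continuousOn).mono hKM)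
    exact ⟨B, fun y hy => hB y hy⟩
  choose b hb using hbk
  have hbnn : ∀ k, 0 ≤ b k := fun k => (abs_nonneg _).trans (hb k m₁ hm₁K)
  -- bound for exp (-C)
  obtain ⟨E, hE⟩ := hKc.exists_bound_of_continuousOn
    (((contDiffOn_C hM hmem hpsi).continuousOn).mono hKM)
  set C : ℝ → ℝ := fun m => cumulant μ (ψ m) with hCdef
  have hEbd : ∀ y ∈ K, Real.exp (-(C y)) ≤ Real.exp E := by
    intro y hy
    exact Real.exp_le_exp.2 (neg_le.1 (neg_le_of_abs_le ((abs_neg (C y) ▸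
      (abs_neg (C y)).symm ▸ (hE y hy)))))
  -- min/max of ψ on K
  obtain ⟨mlo, hmlo, hlo⟩ := hKc.exists_isMinOn ⟨m₁, hm₁K⟩ ((hpsi.continuousOn).mono hKM)
  obtain ⟨mhi, hmhi, hhi⟩ := hKc.exists_isMaxOn ⟨m₁, hm₁K⟩ ((hpsi.continuousOn).mono hKM)
  set θ₁ := ψ mhi with hθ₁
  set θ₂ := ψ mlo with hθ₂
  have hθ₁U : θ₁ ∈ interior (laplaceDomain μ) := hmem mhi (hKM hmhi)
  have hθ₂U : θ₂ ∈ interior (laplaceDomain μ) := hmem mlo (hKM hmlo)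
  have hexpbd : ∀ y ∈ K, ∀ x : ℝ,
      Real.exp (ψ y * x) ≤ Real.exp (θ₁ * x) + Real.exp (θ₂ * x) := by
    intro y hy x
    rcases le_or_gt 0 x with hx | hx
    · exact le_add_of_le_of_nonneg
        (Real.exp_le_exp.2 (mul_le_mul_of_nonneg_right (hhi hy) hx)) (Real.exp_nonneg _)
    · have h2 : θ₂ ≤ ψ y := hlo hy
      exact le_add_of_nonneg_of_le (Real.exp_nonneg _)
        (Real.exp_le_exp.2 (mul_le_mul_of_nonpos_right h2 hx.le))
  -- the dominating function
  set bound : ℝ → ℝ := fun x => ∑ k ∈ Finset.range (n + 2),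
    (b k * Real.exp E) * (|x| ^ k * (Real.exp (θ₁ * x) + Real.exp (θ₂ * x))) with hbound
  have hbound_int : Integrable bound μ := by
    refine integrable_finset_sum _ fun k _ => Integrable.const_mul ?_ _
    have h1 := integrable_abs_pow_mul_exp hθ₁U k
    have h2 := integrable_abs_pow_mul_exp hθ₂U k
    have := h1.add h2
    refine this.congr ?_
    filter_upwards with x
    simp only [Pi.add_apply]
    ring
  have key := hasDerivAt_integral_of_dominated_loc_of_deriv_le (μ := μ) (x₀ := m₁)
    (F := fun m x => iteratedDerivWithin n (fun m' => nefDensity μ ψ x m') M m)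
    (F' := fun m x => iteratedDerivWithin (n+1) (fun m' => nefDensity μ ψ x m') M m)
    (bound := bound) (Metric.ball_mem_nhds m₁ hε) ?_ ?_ ?_ ?_ hbound_int ?_
  · exact key.2
  · filter_upwards [hM.mem_nhds hm₁] with m hm
    exact aesm_D hM hmem hpsi n hm
  · exact integrable_D hM hmem hpsi n hm₁
  · exact aesm_D hM hmem hpsi (n+1) hm₁
  · filter_upwards with x
    intro m hmb
    have hmK : m ∈ K := Metric.ball_subset_closedBall hmb
    have hmM : m ∈ M := hKM hmK
    rw [hrep x m hmM]
    have step1 : ‖(∑ k ∈ Finset.range (n + 1 + 1), c k m * x ^ k) * nefDensity μ ψ x m‖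
        ≤ (∑ k ∈ Finset.range (n + 2), b k * |x| ^ k)
          * ((Real.exp (θ₁ * x) + Real.exp (θ₂ * x)) * Real.exp E) := by
      rw [Real.norm_eq_abs, abs_mul]
      have habs : |∑ k ∈ Finset.range (n + 1 + 1), c k m * x ^ k|
          ≤ ∑ k ∈ Finset.range (n + 2), b k * |x| ^ k := by
        refine (Finset.abs_sum_le_sum_abs _ _).trans ?_
        refine Finset.sum_le_sum fun k _ => ?_
        rw [abs_mul, abs_pow]
        exact mul_le_mul_of_nonneg_right (hb k m hmK) (by positivity)
      have hnef : |nefDensity μ ψ x m|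
          ≤ (Real.exp (θ₁ * x) + Real.exp (θ₂ * x)) * Real.exp E := by
        rw [nefDensity, abs_of_nonneg (Real.exp_nonneg _), sub_eq_add_neg, Real.exp_add]
        exact mul_le_mul (hexpbd m hmK x) (hEbd m hmK) (Real.exp_nonneg _)
          (by positivity)
      exact mul_le_mul habs hnef (abs_nonneg _)
        (Finset.sum_nonneg fun k _ => mul_nonneg (hbnn k) (by positivity))
    refine step1.trans (le_of_eq ?_)
    rw [hbound, Finset.sum_mul]
    exact Finset.sum_congr rfl fun k _ => by ring
  · filter_upwards with x
    intro m hmb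
    exact hasDerivAt_D hM hmem hpsi n x (hKM (Metric.ball_subset_closedBall hmb))

variable (hinv : ∀ m ∈ M, deriv (cumulant μ) (ψ m) = m)

set_option linter.unusedSectionVars false in
lemma hasDerivAt_of_contDiffOn {g : ℝ → ℝ} (hg : ContDiffOn ℝ (⊤ : ℕ∞) g M)
    {m : ℝ} (hm : m ∈ M) : HasDerivAt g (derivWithin g M m) m := by
  have hone : ((⊤ : ℕ∞) : WithTop ℕ∞) ≠ 0 := by simp
  have : DifferentiableAt ℝ g m :=
    (hg.differentiableOn hone).differentiableAt (hM.mem_nhds hm)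
  rw [derivWithin_of_isOpen hM hm]
  exact this.hasDerivAt

include hinv in
set_option linter.unusedSectionVars false in
lemma dC_eq : ∀ m ∈ M,
    derivWithin (fun m' => cumulant μ (ψ m')) M m = m * derivWithin ψ M m := by
  intro m hm
  have hone : ((⊤ : ℕ∞) : WithTop ℕ∞) ≠ 0 := by simp
  have hκ : DifferentiableAt ℝ (cumulant μ) (ψ m) :=
    ((contDiffOn_cumulant μ).differentiableOn hone).differentiableAt
      (isOpen_interior.mem_nhds (hmem m hm))
  have hψm : HasDerivAt ψ (derivWithin ψ M m) m := hasDerivAt_of_contDiffOn hM hmem hpsi hpsi hm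
  have hcomp := (hκ.hasDerivAt.comp m hψm)
  rw [derivWithin_of_isOpen hM hm]
  rw [show (fun m' => cumulant μ (ψ m')) = (cumulant μ) ∘ ψ from rfl]
  rw [hcomp.deriv, hinv m hm]

include hinv in
set_option linter.unusedSectionVars false in
lemma D1_formula : ∀ x : ℝ, ∀ m ∈ M,
    iteratedDerivWithin 1 (fun m' => nefDensity μ ψ x m') M m
      = (derivWithin ψ M m * x - m * derivWithin ψ M m) * nefDensity μ ψ x m := by
  intro x m hm
  have hψm : HasDerivAt ψ (derivWithin ψ M m) m := hasDerivAt_of_contDiffOn hM hmem hpsi hpsi hm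
  have hCm : HasDerivAt (fun m' => cumulant μ (ψ m'))
      (derivWithin (fun m' => cumulant μ (ψ m')) M m) m :=
    hasDerivAt_of_contDiffOn hM hmem hpsi (contDiffOn_C hM hmem hpsi) hm
  have hf : HasDerivAt (fun m' => nefDensity μ ψ x m')
      ((derivWithin ψ M m * x - derivWithin (fun m' => cumulant μ (ψ m')) M m)
        * Real.exp (ψ m * x - cumulant μ (ψ m))) m := by
    have h := ((hψm.mul_const x).fun_sub hCm).exp
    refine HasDerivAt.congr_of_eventuallyEq ?_ (by rfl)
    convert h using 1
    · rfl
    · rfl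
    · rfl
    · ring
  rw [iteratedDerivWithin_one, derivWithin_of_isOpen hM hm,
    hf.deriv, dC_eq hM hmem hpsi hinv m hm]
  rfl
variable {m₀ : ℝ} (hm₀ : m₀ ∈ M) (hψ₀ : ψ m₀ = 0)

include hψ₀ in
set_option linter.unusedSectionVars false in
lemma nef_at_m₀ : ∀ x : ℝ, nefDensity μ ψ x m₀ = 1 := by
  intro x
  rw [nefDensity, hψ₀, cumulant_zero μ]
  simp

include hinv hm₀ hψ₀ in
set_option linter.unusedSectionVars false in
lemma D2_formula : ∀ x : ℝ,
    iteratedDerivWithin 2 (fun m' => nefDensity μ ψ x m') M m₀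
      = derivWithin (derivWithin ψ M) M m₀ * (x - m₀) - derivWithin ψ M m₀
        + (derivWithin ψ M m₀)^2 * (x - m₀)^2 := by
  intro x
  have hUD : UniqueDiffWithinAt ℝ M m₀ := hM.uniqueDiffOn m₀ hm₀
  have hdψsm : ContDiffOn ℝ (⊤ : ℕ∞) (derivWithin ψ M) M := hpsi.derivWithin hM.uniqueDiffOn (le_refl _)
  rw [show iteratedDerivWithin 2 (fun m' => nefDensity μ ψ x m') M m₀
      = derivWithin (iteratedDerivWithin 1 (fun m' => nefDensity μ ψ x m') M) M m₀
      from congrFun (iteratedDerivWithin_succ (n := 1)) m₀, derivWithin_of_isOpen hM hm₀]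
  have heq : (iteratedDerivWithin 1 (fun m' => nefDensity μ ψ x m') M)
      =ᶠ[nhds m₀] fun m => (derivWithin ψ M m * x - m * derivWithin ψ M m)
        * Real.exp (ψ m * x - cumulant μ (ψ m)) := by
    filter_upwards [hM.mem_nhds hm₀] with m hm
    rw [D1_formula hM hmem hpsi hinv x m hm]; rfl
  rw [heq.deriv_eq]
  have h1 : HasDerivAt (derivWithin ψ M) (derivWithin (derivWithin ψ M) M m₀) m₀ := hasDerivAt_of_contDiffOn hM hmem hpsi hdψsm hm₀
  have hId : HasDerivAt (fun m => m * derivWithin ψ M m) (1 * (derivWithin ψ M m₀) + m₀ * (derivWithin (derivWithin ψ M) M m₀)) m₀ :=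
    (hasDerivAt_id m₀).mul h1
  have hg : HasDerivAt (fun m => derivWithin ψ M m * x - m * derivWithin ψ M m)
      ((derivWithin (derivWithin ψ M) M m₀) * x - (1 * (derivWithin ψ M m₀) + m₀ * (derivWithin (derivWithin ψ M) M m₀))) m₀ := (h1.mul_const x).sub hId
  have hψm : HasDerivAt ψ (derivWithin ψ M m₀) m₀ := hasDerivAt_of_contDiffOn hM hmem hpsi hpsi hm₀
  have hCm : HasDerivAt (fun m' => cumulant μ (ψ m'))
      (derivWithin (fun m' => cumulant μ (ψ m')) M m₀) m₀ :=
    hasDerivAt_of_contDiffOn hM hmem hpsi (contDiffOn_C hM hmem hpsi) hm₀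
  have hE : HasDerivAt (fun m => Real.exp (ψ m * x - cumulant μ (ψ m)))
      (Real.exp (ψ m₀ * x - cumulant μ (ψ m₀))
        * ((derivWithin ψ M m₀) * x - derivWithin (fun m' => cumulant μ (ψ m')) M m₀)) m₀ :=
    ((hψm.mul_const x).sub hCm).exp
  have htot := hg.fun_mul hE
  rw [htot.deriv]
  have hE1 : Real.exp (ψ m₀ * x - cumulant μ (ψ m₀)) = 1 := by
    rw [hψ₀, cumulant_zero μ]; simp
  rw [hE1, dC_eq hM hmem hpsi hinv m₀ hm₀]
  ring

include hm₀ hψ₀ hinv in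
set_option linter.unusedSectionVars false in
lemma p_ne_zero : derivWithin ψ M m₀ ≠ 0 := by
  have h0U : (0:ℝ) ∈ interior (laplaceDomain μ) := hψ₀ ▸ hmem m₀ hm₀
  have hcum : cumulant μ = fun θ => Real.log (Lk μ 0 θ) := by
    funext θ
    rw [cumulant, Lk]
    congr 1
    refine integral_congr_ae ?_
    filter_upwards with x
    simp
  have hκ' : ∀ θ ∈ interior (laplaceDomain μ),
      HasDerivAt (cumulant μ) (Lk μ 1 θ / Lk μ 0 θ) θ := by
    intro θ hθ
    rw [hcum]
    exact (hasDerivAt_Lk hθ 0).log (Lk_zero_pos μ (interior_subset hθ)).ne'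
  have hdkap : ∀ θ ∈ interior (laplaceDomain μ),
      deriv (cumulant μ) θ = Lk μ 1 θ / Lk μ 0 θ :=
    fun θ hθ => (hκ' θ hθ).deriv
  have hR : DifferentiableAt ℝ (fun θ => Lk μ 1 θ / Lk μ 0 θ) 0 :=
    (hasDerivAt_Lk h0U 1).differentiableAt.div (hasDerivAt_Lk h0U 0).differentiableAt
      (Lk_zero_pos μ (interior_subset h0U)).ne'
  have hdk : DifferentiableAt ℝ (deriv (cumulant μ)) 0 := by
    have heq : deriv (cumulant μ) =ᶠ[nhds 0] fun θ => Lk μ 1 θ / Lk μ 0 θ := by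
      filter_upwards [isOpen_interior.mem_nhds h0U] with θ hθ
      exact hdkap θ hθ
    exact (Filter.EventuallyEq.differentiableAt_iff heq).2 hR
  have hψm : HasDerivAt ψ (derivWithin ψ M m₀) m₀ :=
    hasDerivAt_of_contDiffOn hM hmem hpsi hpsi hm₀
  have hdk2 : HasDerivAt (deriv (cumulant μ)) (deriv (deriv (cumulant μ)) (ψ m₀)) (ψ m₀) := by
    rw [hψ₀]; exact hdk.hasDerivAt
  have hchain : HasDerivAt (fun m => deriv (cumulant μ) (ψ m))
      (deriv (deriv (cumulant μ)) (ψ m₀) * derivWithin ψ M m₀) m₀ := hdk2.comp m₀ hψm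
  have hone : derivWithin (fun m => deriv (cumulant μ) (ψ m)) M m₀ = 1 := by
    rw [derivWithin_congr (fun y hy => hinv y hy) (hinv m₀ hm₀)]
    exact derivWithin_id m₀ M (hM.uniqueDiffOn m₀ hm₀)
  rw [derivWithin_of_isOpen hM hm₀, hchain.deriv] at hone
  intro hp
  rw [hp, mul_zero] at hone
  exact zero_ne_one hone
set_option linter.unusedSectionVars false in
lemma integral_nef_one : ∀ m ∈ M, ∫ x, nefDensity μ ψ x m ∂μ = 1 := by
  intro m hm
  have hL : 0 < ∫ x, Real.exp (ψ m * x) ∂μ := by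
    rw [MeasureTheory.integral_pos_iff_support_of_nonneg]
    · have : (Function.support fun x => Real.exp (ψ m * x)) = Set.univ := by
        ext x; simp [Function.mem_support, Real.exp_ne_zero]
      rw [this]; simp
    · intro x; positivity
    · exact mem_laplaceDomain (interior_subset (hmem m hm))
  have hfun : (fun x => nefDensity μ ψ x m)
      = fun x => Real.exp (-(cumulant μ (ψ m))) * Real.exp (ψ m * x) := by
    funext x
    rw [nefDensity, sub_eq_add_neg, add_comm, Real.exp_add]
  rw [hfun, MeasureTheory.integral_const_mul, cumulant, Real.exp_neg, Real.exp_log hL]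
  field_simp

set_option linter.unusedSectionVars false in
lemma integral_D_eq_zero : ∀ n : ℕ, 1 ≤ n → ∀ m ∈ M,
    ∫ x, iteratedDerivWithin n (fun m' => nefDensity μ ψ x m') M m ∂μ = 0 := by
  have key : ∀ n : ℕ, ∀ m ∈ M,
      ∫ x, iteratedDerivWithin n (fun m' => nefDensity μ ψ x m') M m ∂μ
        = if n = 0 then 1 else 0 := by
    intro n
    induction n with
    | zero =>
      intro m hm
      simp only [if_pos rfl]
      rw [show (fun x => iteratedDerivWithin 0 (fun m' => nefDensity μ ψ x m') M m)
          = fun x => nefDensity μ ψ x m from funext fun x => by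
            rw [iteratedDerivWithin_zero]]
      exact integral_nef_one hM hmem hpsi m hm
    | succ n ih =>
      intro m hm
      simp only [Nat.succ_ne_zero, if_neg]
      have hG := hasDerivAt_integral_D hM hmem hpsi n hm
      have hconst : (fun m' => ∫ x,
          iteratedDerivWithin n (fun m'' => nefDensity μ ψ x m'') M m' ∂μ)
          =ᶠ[nhds m] fun _ => (if n = 0 then (1:ℝ) else 0) := by
        filter_upwards [hM.mem_nhds hm] with y hy
        exact ih y hy
      have hG' : HasDerivAt (fun _ : ℝ => (if n = 0 then (1:ℝ) else 0))
          (∫ x, iteratedDerivWithin (n+1) (fun m' => nefDensity μ ψ x m') M m ∂μ) m :=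
        hG.congr_of_eventuallyEq hconst.symm
      exact (hG'.unique (hasDerivAt_const m _))
  intro n hn m hm
  rw [key n m hm, if_neg (by omega)]

include hm₀ hψ₀ in
set_option linter.unusedSectionVars false in
lemma isPoly_D (n : ℕ) :
    ∃ P : Polynomial ℝ, ∀ x : ℝ,
      iteratedDerivWithin n (fun m' => nefDensity μ ψ x m') M m₀ = P.eval x := by
  obtain ⟨c, _, _, hrep⟩ := rep hM hmem hpsi n
  refine ⟨∑ k ∈ Finset.range (n+1), Polynomial.C (c k m₀) * Polynomial.X ^ k, fun x => ?_⟩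
  rw [hrep x m₀ hm₀, nef_at_m₀ hM hmem hpsi hψ₀ x, mul_one]
  simp [Polynomial.eval_finset_sum]
  end Main

section Poly

variable {μ : Measure ℝ} [IsProbabilityMeasure μ]

lemma integrable_poly (h0 : (0:ℝ) ∈ interior (laplaceDomain μ)) (P : Polynomial ℝ) :
    Integrable (fun x => P.eval x) μ := by
  have hfun : (fun x => P.eval x)
      = fun x => ∑ k ∈ Finset.range (P.natDegree + 1), P.coeff k * x ^ k := by
    funext x
    rw [Polynomial.eval_eq_sum_range]
  rw [hfun]
  refine integrable_finset_sum _ fun k _ => ?_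
  have := (integrable_pow_mul_exp h0 k).const_mul (P.coeff k)
  refine this.congr ?_
  filter_upwards with x
  simp

end Poly


section Alg
variable {μ : Measure ℝ} [IsProbabilityMeasure μ]

set_option maxHeartbeats 1000000 in
lemma main_algebra (P : ℕ → ℝ → ℝ) (p p₂ m₀ a₀ a₁ a₂ a₃ : ℝ)
    (hp : p ≠ 0)
    (hint : ∀ n, Integrable (P n) μ)
    (hintPP : ∀ n q, Integrable (fun x => P n x * P q x) μ)
    (hintxPP : ∀ n q, Integrable (fun x => x * (P n x * P q x)) μ)
    (hintxP : ∀ n, Integrable (fun x => x * P n x) μ)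
    (hP0 : ∀ x, P 0 x = 1)
    (hJ : ∀ n, 1 ≤ n → ∫ x, P n x ∂μ = 0)
    (hP1 : ∀ x : ℝ, P 1 x = p * (x - m₀))
    (hP2 : ∀ x : ℝ, P 2 x = p₂ * (x - m₀) - p + p^2 * (x - m₀)^2)
    (hrec : ∀ n : ℕ, 2 ≤ n → ∀ x : ℝ,
      x * P n x = a₃ * (n * (n - 1) * (n - 2) : ℝ) * P (n - 2) x
        + (n : ℝ) * (a₂ * ((n : ℝ) - 1) + 1) * P (n - 1) x
        + ((n : ℝ) * a₁ + m₀) * P n x + a₀ * P (n + 1) x) :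
    ∀ n q : ℕ, 1 ≤ q → 2 * q ≤ n → ∫ x, P n x * P q x ∂μ = 0 := by
  have hcomb4 : ∀ (f1 f2 f3 f4 : ℝ → ℝ) (c1 c2 c3 c4 : ℝ), Integrable f1 μ →
      Integrable f2 μ → Integrable f3 μ → Integrable f4 μ →
      ∫ x, (c1 * f1 x + c2 * f2 x + c3 * f3 x + c4 * f4 x) ∂μ
        = c1 * (∫ x, f1 x ∂μ) + c2 * (∫ x, f2 x ∂μ) + c3 * (∫ x, f3 x ∂μ)
          + c4 * (∫ x, f4 x ∂μ) := by
    intro f1 f2 f3 f4 c1 c2 c3 c4 h1 h2 h3 h4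
    have g12 : Integrable (fun x => c1 * f1 x + c2 * f2 x) μ := by
      exact (h1.const_mul c1).add (h2.const_mul c2)
    have g123 : Integrable (fun x => c1 * f1 x + c2 * f2 x + c3 * f3 x) μ := by
      exact g12.add (h3.const_mul c3)
    rw [integral_add g123 (h4.const_mul c4), integral_add g12 (h3.const_mul c3),
      integral_add (h1.const_mul c1) (h2.const_mul c2),
      integral_const_mul, integral_const_mul, integral_const_mul, integral_const_mul]
  -- ∫ x * P n = 0 for n ≥ 2
  have hT : ∀ n : ℕ, 2 ≤ n → ∫ x, x * P n x ∂μ = 0 := by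
    intro n hn
    have heq : (fun x => x * P n x) = fun x =>
        (a₃ * (n * (n - 1) * (n - 2) : ℝ)) * P (n - 2) x
        + ((n : ℝ) * (a₂ * ((n : ℝ) - 1) + 1)) * P (n - 1) x
        + (((n : ℝ) * a₁ + m₀)) * P n x + a₀ * P (n + 1) x :=
      funext fun x => hrec n hn x
    rw [heq, hcomb4 _ _ _ _ _ _ _ _ (hint (n-2)) (hint (n-1)) (hint n) (hint (n+1)),
      hJ (n-1) (by omega), hJ n (by omega), hJ (n+1) (by omega)]
    rcases Nat.lt_or_ge n 3 with h3 | h3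
    · have hn2 : n = 2 := by omega
      subst hn2
      norm_num
    · rw [hJ (n-2) (by omega)]
      ring
  -- orthogonality with P 1
  have hI1 : ∀ n : ℕ, 2 ≤ n → ∫ x, P n x * P 1 x ∂μ = 0 := by
    intro n hn
    have heq : (fun x => P n x * P 1 x)
        = fun x => p * (x * P n x) + (-(p * m₀)) * P n x :=
      funext fun x => by rw [hP1 x]; ring
    have gxp : Integrable (fun x => p * (x * P n x)) μ := by
      exact (hintxP n).const_mul p
    rw [heq, integral_add gxp ((hint n).const_mul _),
      integral_const_mul, integral_const_mul, hT n hn, hJ n (by omega)]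
    ring
  -- a₀ ≠ 0
  have ha₀ : a₀ ≠ 0 := by
    intro ha
    have key : ∀ x : ℝ, x * (p₂ * (x - m₀) - p + p^2 * (x - m₀)^2)
        = a₃ * ((2:ℝ) * ((2:ℝ) - 1) * ((2:ℝ) - 2)) * 1
          + (2:ℝ) * (a₂ * ((2:ℝ) - 1) + 1) * (p * (x - m₀))
          + ((2:ℝ) * a₁ + m₀) * (p₂ * (x - m₀) - p + p^2 * (x - m₀)^2)
          + 0 * P 3 x := by
      intro x
      have h := hrec 2 (le_refl 2) x
      rw [ha] at h
      rw [show (2:ℕ) - 2 = 0 from rfl, show (2:ℕ) - 1 = 1 from rfl] at h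
      rw [hP0 x, hP1 x, hP2 x] at h
      convert h using 2 <;> push_cast <;> ring
    have h0 := key m₀
    have h1 := key (m₀ + 1)
    have h2 := key (m₀ - 1)
    have h3 := key (m₀ + 2)
    have hp2 : p ^ 2 = 0 := by
      linear_combination (1/6 : ℝ) * h3 - (1/2 : ℝ) * h1 - (1/6 : ℝ) * h2 + (1/2 : ℝ) * h0
    exact hp ((pow_eq_zero_iff (by norm_num : (2:ℕ) ≠ 0)).1 hp2)
  -- special first-step recurrence
  have hq1 : ∀ x : ℝ, x * P 1 x = 1 + (m₀ - p₂ / p^2) * P 1 x + (1/p) * P 2 x := by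
    intro x
    rw [hP1 x, hP2 x]
    field_simp
    ring
  -- main claim by strong induction
  have claim : ∀ q : ℕ, 1 ≤ q → ∀ n : ℕ, 2 * q ≤ n → ∫ x, P n x * P q x ∂μ = 0 := by
    intro q
    induction q using Nat.strong_induction_on with
    | _ q ih =>
    intro hq n hn
    rcases Nat.lt_or_ge q 3 with hq3 | hq3
    · interval_cases q
      · exact hI1 n (by omega)
      · -- q = 2, n ≥ 4
        have hA : ∫ x, x * (P n x * P 1 x) ∂μ = 0 := by
          have heq : (fun x => x * (P n x * P 1 x)) = fun x =>
              (a₃ * (n * (n - 1) * (n - 2) : ℝ)) * (P (n - 2) x * P 1 x)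
              + ((n : ℝ) * (a₂ * ((n : ℝ) - 1) + 1)) * (P (n - 1) x * P 1 x)
              + (((n : ℝ) * a₁ + m₀)) * (P n x * P 1 x)
              + a₀ * (P (n + 1) x * P 1 x) :=
            funext fun x => by linear_combination (P 1 x) * hrec n (by omega) x
          rw [heq, hcomb4 _ _ _ _ _ _ _ _ (hintPP (n-2) 1) (hintPP (n-1) 1) (hintPP n 1)
              (hintPP (n+1) 1),
            hI1 (n-2) (by omega), hI1 (n-1) (by omega), hI1 n (by omega),
            hI1 (n+1) (by omega)]
          ring
        have heq2 : (fun x => x * (P n x * P 1 x)) = fun x =>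
            1 * P n x + (m₀ - p₂ / p^2) * (P n x * P 1 x) + (1/p) * (P n x * P 2 x) :=
          funext fun x => by linear_combination (P n x) * hq1 x
        rw [heq2] at hA
        have g1 : Integrable (fun x => 1 * P n x) μ := by exact (hint n).const_mul 1
        have g2 : Integrable (fun x => (m₀ - p₂ / p^2) * (P n x * P 1 x)) μ := by
          exact (hintPP n 1).const_mul _
        have g12 : Integrable (fun x => 1 * P n x + (m₀ - p₂ / p^2) * (P n x * P 1 x)) μ := by
          exact g1.add g2
        rw [integral_add g12 ((hintPP n 2).const_mul _), integral_add g1 g2,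
          integral_const_mul, integral_const_mul, integral_const_mul,
          hJ n (by omega), hI1 n (by omega)] at hA
        have hz : (1/p) * ∫ x, P n x * P 2 x ∂μ = 0 := by linarith
        rcases mul_eq_zero.1 hz with h | h
        · exact absurd h (by positivity)
        · exact h
    · -- q ≥ 3 : general step with r := q - 1 ≥ 2
      obtain ⟨r, rfl⟩ : ∃ r, q = r + 1 := ⟨q - 1, by omega⟩
      have hr2 : 2 ≤ r := by omega
      have hA : ∫ x, x * (P n x * P r x) ∂μ = 0 := by
        have heq : (fun x => x * (P n x * P r x)) = fun x =>
            (a₃ * (n * (n - 1) * (n - 2) : ℝ)) * (P (n - 2) x * P r x)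
            + ((n : ℝ) * (a₂ * ((n : ℝ) - 1) + 1)) * (P (n - 1) x * P r x)
            + (((n : ℝ) * a₁ + m₀)) * (P n x * P r x)
            + a₀ * (P (n + 1) x * P r x) :=
          funext fun x => by linear_combination (P r x) * hrec n (by omega) x
        rw [heq, hcomb4 _ _ _ _ _ _ _ _ (hintPP (n-2) r) (hintPP (n-1) r) (hintPP n r)
            (hintPP (n+1) r),
          ih r (by omega) (by omega) (n-2) (by omega),
          ih r (by omega) (by omega) (n-1) (by omega),
          ih r (by omega) (by omega) n (by omega),
          ih r (by omega) (by omega) (n+1) (by omega)]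
        ring
      have hB : (fun x => x * (P n x * P r x)) = fun x =>
          (a₃ * (r * (r - 1) * (r - 2) : ℝ)) * (P n x * P (r - 2) x)
          + ((r : ℝ) * (a₂ * ((r : ℝ) - 1) + 1)) * (P n x * P (r - 1) x)
          + (((r : ℝ) * a₁ + m₀)) * (P n x * P r x)
          + a₀ * (P n x * P (r + 1) x) :=
        funext fun x => by linear_combination (P n x) * hrec r hr2 x
      rw [hB, hcomb4 _ _ _ _ _ _ _ _ (hintPP n (r-2)) (hintPP n (r-1)) (hintPP n r)
          (hintPP n (r+1))] at hA
      have hz1 : ∫ x, P n x * P (r - 2) x ∂μ = 0 := by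
        rcases Nat.eq_or_lt_of_le hr2 with h2 | h2
        · have hr0 : r - 2 = 0 := by omega
          rw [hr0]
          have hPn : (fun x => P n x * P 0 x) = fun x => P n x := funext fun x => by
            rw [hP0 x, mul_one]
          rw [hPn]
          exact hJ n (by omega)
        · exact ih (r-2) (by omega) (by omega) n (by omega)
      have hz2 : ∫ x, P n x * P (r - 1) x ∂μ = 0 :=
        ih (r-1) (by omega) (by omega) n (by omega)
      have hz3 : ∫ x, P n x * P r x ∂μ = 0 := ih r (by omega) (by omega) n (by omega)
      rw [hz1, hz2, hz3] at hA
      have hz : a₀ * ∫ x, P n x * P (r + 1) x ∂μ = 0 := by linarith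
      rcases mul_eq_zero.1 hz with h | h
      · exact absurd h ha₀
      · exact h
  exact fun n q hq hn => claim q hq n hn

end Alg

/-- If the Feinsilver polynomials of a NEF satisfy the four-term recurrence of a cubic
variance function, then they are `μ`-2-orthogonal: `∫ P_n P_q dμ = 0` whenever
`n ≥ 2q ≥ 2`, and `∫ P_n dμ = 0` for `n ≥ 1`. -/
theorem feinsilver_two_orthogonal_of_recurrence (μ : Measure ℝ) [IsProbabilityMeasure μ]
    (hμpt : ∀ c : ℝ, μ {c}ᶜ ≠ 0)
    (ψ : ℝ → ℝ) (M : Set ℝ) (hM : IsOpen M)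
    (hmem : ∀ m ∈ M, ψ m ∈ interior (laplaceDomain μ))
    (hinv : ∀ m ∈ M, deriv (cumulant μ) (ψ m) = m)
    (hψ : ContDiffOn ℝ ⊤ ψ M)
    (m₀ : ℝ) (hm₀ : m₀ ∈ M) (hψ₀ : ψ m₀ = 0)
    (a₀ a₁ a₂ a₃ : ℝ)
    (hrec : ∀ n : ℕ, 2 ≤ n → ∀ x : ℝ,
      x * iteratedDerivWithin n (fun m' => nefDensity μ ψ x m') M m₀
        = a₃ * (n * (n - 1) * (n - 2) : ℝ)
            * iteratedDerivWithin (n - 2) (fun m' => nefDensity μ ψ x m') M m₀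
          + (n : ℝ) * (a₂ * ((n : ℝ) - 1) + 1)
            * iteratedDerivWithin (n - 1) (fun m' => nefDensity μ ψ x m') M m₀
          + ((n : ℝ) * a₁ + m₀)
            * iteratedDerivWithin n (fun m' => nefDensity μ ψ x m') M m₀
          + a₀ * iteratedDerivWithin (n + 1) (fun m' => nefDensity μ ψ x m') M m₀) :
    (∀ n q : ℕ, 1 ≤ q → 2 * q ≤ n →
      ∫ x, iteratedDerivWithin n (fun m' => nefDensity μ ψ x m') M m₀
        * iteratedDerivWithin q (fun m' => nefDensity μ ψ x m') M m₀ ∂μ = 0)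
    ∧ ∀ n : ℕ, 1 ≤ n →
        ∫ x, iteratedDerivWithin n (fun m' => nefDensity μ ψ x m') M m₀ ∂μ = 0 := by
  have hpsi : ContDiffOn ℝ ((⊤ : ℕ∞) : WithTop ℕ∞) ψ M := hψ.of_le le_top
  have h0U : (0:ℝ) ∈ interior (laplaceDomain μ) := hψ₀ ▸ hmem m₀ hm₀
  have hpoly : ∀ n : ℕ, ∃ P : Polynomial ℝ, ∀ x : ℝ,
      iteratedDerivWithin n (fun m' => nefDensity μ ψ x m') M m₀ = P.eval x :=
    isPoly_D hM hmem hpsi hm₀ hψ₀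
  have hint : ∀ n : ℕ, Integrable
      (fun x => iteratedDerivWithin n (fun m' => nefDensity μ ψ x m') M m₀) μ := by
    intro n
    obtain ⟨Q, hQ⟩ := hpoly n
    refine (integrable_poly h0U Q).congr ?_
    filter_upwards with x
    exact (hQ x).symm
  have hintPP : ∀ n q : ℕ, Integrable
      (fun x => iteratedDerivWithin n (fun m' => nefDensity μ ψ x m') M m₀
        * iteratedDerivWithin q (fun m' => nefDensity μ ψ x m') M m₀) μ := by
    intro n q
    obtain ⟨Qn, hQn⟩ := hpoly n
    obtain ⟨Qq, hQq⟩ := hpoly q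
    refine (integrable_poly h0U (Qn * Qq)).congr ?_
    filter_upwards with x
    rw [Polynomial.eval_mul, hQn x, hQq x]
  have hintxPP : ∀ n q : ℕ, Integrable
      (fun x => x * (iteratedDerivWithin n (fun m' => nefDensity μ ψ x m') M m₀
        * iteratedDerivWithin q (fun m' => nefDensity μ ψ x m') M m₀)) μ := by
    intro n q
    obtain ⟨Qn, hQn⟩ := hpoly n
    obtain ⟨Qq, hQq⟩ := hpoly q
    refine (integrable_poly h0U (Polynomial.X * (Qn * Qq))).congr ?_
    filter_upwards with x
    rw [Polynomial.eval_mul, Polynomial.eval_mul, Polynomial.eval_X, hQn x, hQq x]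
  have hintxP : ∀ n : ℕ, Integrable
      (fun x => x * iteratedDerivWithin n (fun m' => nefDensity μ ψ x m') M m₀) μ := by
    intro n
    obtain ⟨Qn, hQn⟩ := hpoly n
    refine (integrable_poly h0U (Polynomial.X * Qn)).congr ?_
    filter_upwards with x
    rw [Polynomial.eval_mul, Polynomial.eval_X, hQn x]
  have hJ : ∀ n : ℕ, 1 ≤ n →
      ∫ x, iteratedDerivWithin n (fun m' => nefDensity μ ψ x m') M m₀ ∂μ = 0 :=
    fun n hn => integral_D_eq_zero hM hmem hpsi n hn m₀ hm₀
  refine ⟨?_, hJ⟩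
  have hP0 : ∀ x : ℝ, iteratedDerivWithin 0 (fun m' => nefDensity μ ψ x m') M m₀ = 1 := by
    intro x
    rw [iteratedDerivWithin_zero]
    exact nef_at_m₀ hM hmem hpsi hψ₀ x
  have hP1 : ∀ x : ℝ, iteratedDerivWithin 1 (fun m' => nefDensity μ ψ x m') M m₀
      = derivWithin ψ M m₀ * (x - m₀) := by
    intro x
    rw [D1_formula hM hmem hpsi hinv x m₀ hm₀, nef_at_m₀ hM hmem hpsi hψ₀ x]
    ring
  exact main_algebra (fun n x => iteratedDerivWithin n (fun m' => nefDensity μ ψ x m') M m₀)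
    (derivWithin ψ M m₀) (derivWithin (derivWithin ψ M) M m₀) m₀ a₀ a₁ a₂ a₃
    (p_ne_zero hM hmem hpsi hinv hm₀ hψ₀) hint hintPP hintxPP hintxP hP0 hJ hP1
    (D2_formula hM hmem hpsi hinv hm₀ hψ₀) hrec
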